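/- arXiv:math/0411134 — 2 statements merged into one kernel-verified Lean document; each statement's English description precedes it below -/
import Mathlib

section
/- Let L be a lattice of full rank n on Euclidean space E and let B ∈ ℝ be such that S = {v ∈ L \ {0} : ||v|| ≤ B} generates L as a ℤ-module. Let I ⊆ S be the set of (linearly) indecomposable vectors of S, let Γ be the graph on vertex set I with an edge between v and w whenever (v,w) ≠ 0, let I_1, …, I_r be the vertex sets of the connected components of Γ, and set L_i = ℤ-span of I_i. Then each L_i is an indecomposable lattice, L = L_1 ⊕ … ⊕ L_r is an orthogonal direct sum, and this decomposition of L into indecomposable mutually orthogonal sublattices is unique up to the order of the summands. -/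
open scoped RealInnerProductSpace

noncomputable section

abbrev Euc (n : ℕ) := EuclideanSpace ℝ (Fin n)

/-- A (full-rank) lattice on the euclidean space `Euc n`: a discrete `ℤ`-submodule
whose real span is everything. -/
def IsLattice {n : ℕ} (L : Submodule ℤ (Euc n)) : Prop :=
  DiscreteTopology L ∧ Submodule.span ℝ (L : Set (Euc n)) = ⊤

/-- `v` is orthogonally decomposable in `L`: `v = x + y` with `x, y ∈ L \ {0}`
and `(x,y) = 0`. -/
def OrthDecomp {n : ℕ} (L : Submodule ℤ (Euc n)) (v : Euc n) : Prop :=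
  ∃ x y : Euc n, x ∈ L ∧ y ∈ L ∧ x ≠ 0 ∧ y ≠ 0 ∧ v = x + y ∧ ⟪x, y⟫ = 0

/-- `v` is acutely decomposable in `L`: `v = x + y` with `x, y ∈ L \ {0}`
and `(x,y) ≥ 0`. -/
def AcuteDecomp {n : ℕ} (L : Submodule ℤ (Euc n)) (v : Euc n) : Prop :=
  ∃ x y : Euc n, x ∈ L ∧ y ∈ L ∧ x ≠ 0 ∧ y ≠ 0 ∧ v = x + y ∧ 0 ≤ ⟪x, y⟫

/-- `v` is (linearly) decomposable in `L`: `v = x + y` with `x, y ∈ L` and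
`‖v‖ > ‖x‖ ≥ ‖y‖`. -/
def LinDecomp {n : ℕ} (L : Submodule ℤ (Euc n)) (v : Euc n) : Prop :=
  ∃ x y : Euc n, x ∈ L ∧ y ∈ L ∧ v = x + y ∧ ‖x‖ < ‖v‖ ∧ ‖y‖ ≤ ‖x‖

/-- Two submodules are orthogonal if all their vectors are. -/
def OrthogonalLat {n : ℕ} (A C : Submodule ℤ (Euc n)) : Prop :=
  ∀ x ∈ A, ∀ y ∈ C, ⟪x, y⟫ = 0

/-- A nontrivial lattice is decomposable if it is the sum of two nonzero
orthogonal sublattices. -/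
def DecomposableLat {n : ℕ} (L : Submodule ℤ (Euc n)) : Prop :=
  ∃ A C : Submodule ℤ (Euc n), A ≠ ⊥ ∧ C ≠ ⊥ ∧ A ⊔ C = L ∧ OrthogonalLat A C

/-! ### Auxiliary lemmas -/

lemma kneserAux_inner_span_zero_right {n : ℕ} {x : Euc n} {t : Set (Euc n)}
    (h : ∀ y ∈ t, ⟪x, y⟫ = 0) : ∀ y ∈ Submodule.span ℤ t, ⟪x, y⟫ = 0 := by
  intro y hy
  induction hy using Submodule.span_induction with
  | mem y hy => exact h y hy
  | zero => simp
  | add a b _ _ ha hb => rw [inner_add_right, ha, hb, add_zero]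
  | smul z a _ ha => rw [← Int.cast_smul_eq_zsmul ℝ z a, real_inner_smul_right, ha, mul_zero]

lemma kneserAux_orth_span_span {n : ℕ} {s t : Set (Euc n)}
    (h : ∀ x ∈ s, ∀ y ∈ t, ⟪x, y⟫ = 0) :
    OrthogonalLat (Submodule.span ℤ s) (Submodule.span ℤ t) := by
  intro x hx y hy
  have hx' : ∀ z ∈ t, ⟪x, z⟫ = 0 := by
    intro z hz
    rw [real_inner_comm]
    exact kneserAux_inner_span_zero_right
      (fun w hw => by rw [real_inner_comm]; exact h w hw z hz) x hx
  exact kneserAux_inner_span_zero_right hx' y hy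

lemma kneserAux_orthLat_iSup {n : ℕ} {ι : Sort*} {A : Submodule ℤ (Euc n)}
    {C : ι → Submodule ℤ (Euc n)}
    (h : ∀ j, OrthogonalLat A (C j)) : OrthogonalLat A (⨆ j, C j) := by
  intro x hx y hy
  refine Submodule.iSup_induction (motive := fun y => ⟪x, y⟫ = 0) C hy
    (fun j y hy => h j x hx y hy) (by simp) ?_
  intro a b ha hb
  rw [inner_add_right, ha, hb, add_zero]

lemma kneserAux_walk_iff {V : Type*} {G : SimpleGraph V} (P : V → Prop)
    (h : ∀ u w : V, G.Adj u w → (P u ↔ P w)) :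
    ∀ {u w : V}, G.Walk u w → (P u ↔ P w) := by
  intro u w p
  induction p with
  | nil => exact Iff.rfl
  | cons h' p ih => exact (h _ _ h').trans ih

/-- Kneser. Let `S = {v ∈ L \ {0} : ‖v‖ ≤ B}` generate `L`, let
`I ⊆ S` be the set of (linearly) indecomposable vectors of `S`, let `Γ` be the graph
on `I` joining `v` and `w` whenever `(v,w) ≠ 0`, and for each connected component `c`
of `Γ` let `Lc c` be the `ℤ`-span of its vertex set.  Then each `Lc c` is an
indecomposable lattice, `L` is the orthogonal direct sum of the `Lc c`, and this
decomposition into indecomposable mutually orthogonal sublattices is unique up to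
the order of the summands. -/
theorem kneser_decomposition {n : ℕ} (L : Submodule ℤ (Euc n)) (hL : IsLattice L)
    (B : ℝ) (S : Set (Euc n)) (hS : S = {v : Euc n | v ∈ L ∧ v ≠ 0 ∧ ‖v‖ ≤ B})
    (hgen : Submodule.span ℤ S = L)
    (I : Set (Euc n)) (hI : I = {v ∈ S | ¬ LinDecomp L v})
    (Γ : SimpleGraph I)
    (hΓ : ∀ u w : I, Γ.Adj u w ↔ ((u : Euc n) ≠ (w : Euc n) ∧ ⟪(u : Euc n), (w : Euc n)⟫ ≠ 0))
    (Lc : Γ.ConnectedComponent → Submodule ℤ (Euc n))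
    (hLc : ∀ c, Lc c =
      Submodule.span ℤ {v : Euc n | ∃ hv : v ∈ I, Γ.connectedComponentMk ⟨v, hv⟩ = c}) :
    (∀ c, Lc c ≠ ⊥ ∧ ¬ DecomposableLat (Lc c)) ∧
    (⨆ c, Lc c) = L ∧
    (∀ c c', c ≠ c' → OrthogonalLat (Lc c) (Lc c')) ∧
    (∀ (ι : Type) (M : ι → Submodule ℤ (Euc n)),
        (∀ i, M i ≠ ⊥ ∧ ¬ DecomposableLat (M i)) →
        (∀ i j, i ≠ j → OrthogonalLat (M i) (M j)) →
        (⨆ i, M i) = L →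
        ∃ e : ι ≃ Γ.ConnectedComponent, ∀ i, M i = Lc (e i)) := by
  classical
  obtain ⟨hdisc, -⟩ := hL
  have hSsub : ∀ v ∈ S, v ∈ L := by intro v hv; rw [hS] at hv; exact hv.1
  have hS0 : ∀ v ∈ S, v ≠ 0 := by intro v hv; rw [hS] at hv; exact hv.2.1
  have hSB : ∀ v ∈ S, ‖v‖ ≤ B := by intro v hv; rw [hS] at hv; exact hv.2.2
  have hIS : ∀ v ∈ I, v ∈ S := by intro v hv; rw [hI] at hv; exact hv.1
  have hIL : ∀ v ∈ I, v ∈ L := fun v hv => hSsub v (hIS v hv)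
  have hI0 : ∀ v ∈ I, v ≠ 0 := fun v hv => hS0 v (hIS v hv)
  have hInd : ∀ v ∈ I, ¬ LinDecomp L v := by intro v hv; rw [hI] at hv; exact hv.2
  -- orthogonal decomposability implies linear decomposability
  have orth_to_lin : ∀ v : Euc n, OrthDecomp L v → LinDecomp L v := by
    rintro v ⟨x, y, hx, hy, hx0, hy0, rfl, hxy⟩
    have hsq : ‖x + y‖ ^ 2 = ‖x‖ ^ 2 + ‖y‖ ^ 2 := by
      rw [norm_add_sq_real, hxy]; ring
    rcases le_total ‖y‖ ‖x‖ with h | h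
    · refine ⟨x, y, hx, hy, rfl, ?_, h⟩
      nlinarith [norm_pos_iff.mpr hy0, norm_nonneg x, norm_nonneg (x + y)]
    · refine ⟨y, x, hy, hx, add_comm x y, ?_, h⟩
      nlinarith [norm_pos_iff.mpr hx0, norm_nonneg y, norm_nonneg (x + y)]
  have hIod : ∀ v ∈ I, ¬ OrthDecomp L v := fun v hv hod => hInd v hv (orth_to_lin v hod)
  -- finiteness of S
  have hSfin : S.Finite := by
    haveI : DiscreteTopology (↥(L : Set (Euc n))) := hdisc
    have hclosed : IsClosed (L : Set (Euc n)) := by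
      haveI : DiscreteTopology L.toAddSubgroup := hdisc
      have h := AddSubgroup.isClosed_of_discrete (H := L.toAddSubgroup)
      simpa using h
    have hfin := Metric.finite_isBounded_inter_isClosed
      (K := Metric.closedBall (0 : Euc n) B) (s := (L : Set (Euc n)))
      DiscreteTopology.isDiscrete Metric.isBounded_closedBall hclosed
    refine hfin.subset ?_
    intro v hv
    exact ⟨by simpa [Metric.mem_closedBall, dist_zero_right] using hSB v hv, hSsub v hv⟩
  -- decomposition step inside S
  have step : ∀ v ∈ S, LinDecomp L v →
      ∃ x y : Euc n, x ∈ S ∧ y ∈ S ∧ v = x + y ∧ ‖x‖ < ‖v‖ ∧ ‖y‖ < ‖v‖ := by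
    rintro v hv ⟨x, y, hx, hy, hvxy, h1, h2⟩
    have hyv : ‖y‖ < ‖v‖ := lt_of_le_of_lt h2 h1
    have hx0 : x ≠ 0 := by
      rintro rfl
      have hy' : y = 0 := norm_le_zero_iff.mp (by simpa using h2)
      exact hS0 v hv (by simp [hvxy, hy'])
    have hy0 : y ≠ 0 := by
      rintro rfl
      have hvx : v = x := by simpa using hvxy
      rw [hvx] at h1
      exact lt_irrefl _ h1
    refine ⟨x, y, ?_, ?_, hvxy, h1, hyv⟩
    · rw [hS]; exact ⟨hx, hx0, h1.le.trans (hSB v hv)⟩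
    · rw [hS]; exact ⟨hy, hy0, hyv.le.trans (hSB v hv)⟩
  -- S is contained in the span of I
  have hSspanI : ∀ v ∈ S, v ∈ Submodule.span ℤ I := by
    have key : ∀ k : ℕ, ∀ v ∈ S,
        (hSfin.toFinset.filter (fun w => ‖w‖ < ‖v‖)).card ≤ k → v ∈ Submodule.span ℤ I := by
      intro k
      induction k with
      | zero =>
        intro v hv hcard
        by_cases hd : LinDecomp L v
        · exfalso
          obtain ⟨x, y, hxS, hyS, hvxy, h1, h2⟩ := step v hv hd
          have hxmem : x ∈ hSfin.toFinset.filter (fun w => ‖w‖ < ‖v‖) := by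
            simp only [Finset.mem_filter, Set.Finite.mem_toFinset]
            exact ⟨hxS, h1⟩
          have := Finset.card_pos.mpr ⟨x, hxmem⟩
          omega
        · exact Submodule.subset_span (by rw [hI]; exact ⟨hv, hd⟩)
      | succ k ih =>
        intro v hv hcard
        by_cases hd : LinDecomp L v
        · obtain ⟨x, y, hxS, hyS, hvxy, h1, h2⟩ := step v hv hd
          have hlt : ∀ z ∈ S, ‖z‖ < ‖v‖ →
              (hSfin.toFinset.filter (fun w => ‖w‖ < ‖z‖)).card ≤ k := by
            intro z hz hzv
            have hsub : hSfin.toFinset.filter (fun w => ‖w‖ < ‖z‖) ⊆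
                hSfin.toFinset.filter (fun w => ‖w‖ < ‖v‖) := by
              intro w hw
              simp only [Finset.mem_filter] at hw ⊢
              exact ⟨hw.1, hw.2.trans hzv⟩
            have hzmem : z ∈ hSfin.toFinset.filter (fun w => ‖w‖ < ‖v‖) := by
              simp only [Finset.mem_filter, Set.Finite.mem_toFinset]
              exact ⟨hz, hzv⟩
            have hznot : z ∉ hSfin.toFinset.filter (fun w => ‖w‖ < ‖z‖) := by
              simp
            have := Finset.card_lt_card
              ((Finset.ssubset_iff_of_subset hsub).mpr ⟨z, hzmem, hznot⟩)
            omega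
          have hxs := ih x hxS (hlt x hxS h1)
          have hys := ih y hyS (hlt y hyS h2)
          rw [hvxy]
          exact Submodule.add_mem _ hxs hys
        · exact Submodule.subset_span (by rw [hI]; exact ⟨hv, hd⟩)
    intro v hv
    exact key _ v hv le_rfl
  have hspanI : Submodule.span ℤ I = L := by
    refine le_antisymm (Submodule.span_le.mpr (fun v hv => hIL v hv)) ?_
    rw [← hgen]
    exact Submodule.span_le.mpr hSspanI
  -- basic facts about the components
  have hvertmem : ∀ (v : Euc n) (hv : v ∈ I), v ∈ Lc (Γ.connectedComponentMk ⟨v, hv⟩) := by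
    intro v hv
    rw [hLc]
    exact Submodule.subset_span ⟨hv, rfl⟩
  have hLcle : ∀ c, Lc c ≤ L := by
    intro c
    rw [hLc]
    exact Submodule.span_le.mpr (fun v hv => hIL v hv.choose)
  have hsupLc : (⨆ c, Lc c) = L := by
    have h1 : (⨆ c, Lc c) = Submodule.span ℤ
        (⋃ c, {v : Euc n | ∃ hv : v ∈ I, Γ.connectedComponentMk ⟨v, hv⟩ = c}) := by
      rw [Submodule.span_iUnion]
      exact iSup_congr hLc
    have h2 : (⋃ c, {v : Euc n | ∃ hv : v ∈ I, Γ.connectedComponentMk ⟨v, hv⟩ = c}) = I := by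
      ext v
      simp only [Set.mem_iUnion, Set.mem_setOf_eq]
      constructor
      · rintro ⟨c, hv, -⟩; exact hv
      · intro hv; exact ⟨Γ.connectedComponentMk ⟨v, hv⟩, hv, rfl⟩
    rw [h1, h2, hspanI]
  have horth : ∀ c c', c ≠ c' → OrthogonalLat (Lc c) (Lc c') := by
    intro c c' hcc
    rw [hLc c, hLc c']
    apply kneserAux_orth_span_span
    rintro x ⟨hxI, hxc⟩ y ⟨hyI, hyc⟩
    by_contra hne
    apply hcc
    by_cases hxy : x = y
    · subst hxy
      rw [← hxc, ← hyc]
    · have hadj : Γ.Adj ⟨x, hxI⟩ ⟨y, hyI⟩ := (hΓ _ _).mpr ⟨hxy, hne⟩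
      rw [← hxc, ← hyc]
      exact SimpleGraph.ConnectedComponent.sound hadj.reachable
  have hLcne : ∀ c, Lc c ≠ ⊥ := by
    intro c
    obtain ⟨u, hu⟩ := c.exists_rep
    rw [Submodule.ne_bot_iff]
    exact ⟨u, by rw [← hu]; exact hvertmem ↑u u.2, hI0 ↑u u.2⟩
  -- indecomposability of each component lattice
  have hindec : ∀ c, ¬ DecomposableLat (Lc c) := by
    rintro c ⟨A, C, hA, hC, hsup, hAC⟩
    have hAle : A ≤ L := le_trans (le_trans le_sup_left hsup.le) (hLcle c)
    have hCle : C ≤ L := le_trans (le_trans le_sup_right hsup.le) (hLcle c)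
    have hside : ∀ u : I, Γ.connectedComponentMk u = c →
        ((u : Euc n) ∈ A ∨ (u : Euc n) ∈ C) ∧ ¬((u : Euc n) ∈ A ∧ (u : Euc n) ∈ C) := by
      intro u huc
      have hvL : (u : Euc n) ∈ A ⊔ C := by
        rw [hsup, ← huc]; exact hvertmem ↑u u.2
      obtain ⟨a, ha, b, hb, hab⟩ := Submodule.mem_sup.mp hvL
      constructor
      · by_cases ha0 : a = 0
        · right; rw [← hab, ha0, zero_add]; exact hb
        by_cases hb0 : b = 0
        · left; rw [← hab, hb0, add_zero]; exact ha
        exact absurd ⟨a, b, hAle ha, hCle hb, ha0, hb0, hab.symm, hAC a ha b hb⟩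
          (hIod ↑u u.2)
      · rintro ⟨huA, huC⟩
        exact hI0 ↑u u.2 (inner_self_eq_zero.mp (hAC _ huA _ huC))
    have hstep : ∀ u w : I, Γ.Adj u w →
        ((Γ.connectedComponentMk u = c → (u : Euc n) ∈ A) ↔
         (Γ.connectedComponentMk w = c → (w : Euc n) ∈ A)) := by
      intro u w hadj
      have hmk : Γ.connectedComponentMk u = Γ.connectedComponentMk w :=
        SimpleGraph.ConnectedComponent.sound hadj.reachable
      have hinner : ⟪(u : Euc n), (w : Euc n)⟫ ≠ 0 := ((hΓ u w).mp hadj).2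
      constructor
      · intro h hwc
        have huA : (u : Euc n) ∈ A := h (hmk.trans hwc)
        rcases (hside w hwc).1 with h' | h'
        · exact h'
        · exact absurd (hAC _ huA _ h') hinner
      · intro h huc
        have hwA : (w : Euc n) ∈ A := h (hmk.symm.trans huc)
        rcases (hside u huc).1 with h' | h'
        · exact h'
        · exact absurd (hAC _ hwA _ h') (by rwa [real_inner_comm] at hinner)
    obtain ⟨u0, hu0⟩ := c.exists_rep
    have hall : ∀ u : I, Γ.connectedComponentMk u = c →
        ((u : Euc n) ∈ A ↔ (u0 : Euc n) ∈ A) := by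
      intro u huc
      have hreach : Γ.Reachable u u0 :=
        SimpleGraph.ConnectedComponent.eq.mp (huc.trans hu0.symm)
      obtain ⟨p⟩ := hreach
      have hiff := kneserAux_walk_iff _ hstep p
      constructor
      · intro h; exact (hiff.mp (fun _ => h)) hu0
      · intro h; exact (hiff.mpr (fun _ => h)) huc
    by_cases hu0A : (u0 : Euc n) ∈ A
    · have hLcA : Lc c ≤ A := by
        rw [hLc]
        refine Submodule.span_le.mpr ?_
        rintro v ⟨hv, hvc⟩
        exact (hall ⟨v, hv⟩ hvc).mpr hu0A
      obtain ⟨y, hyC, hy0⟩ := (Submodule.ne_bot_iff _).mp hC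
      have hyLc : y ∈ Lc c := hsup ▸ Submodule.mem_sup_right hyC
      exact hy0 (inner_self_eq_zero.mp (hAC y (hLcA hyLc) y hyC))
    · have hu0C : (u0 : Euc n) ∈ C := ((hside u0 hu0).1).resolve_left hu0A
      have hLcC : Lc c ≤ C := by
        rw [hLc]
        refine Submodule.span_le.mpr ?_
        rintro v ⟨hv, hvc⟩
        rcases (hside ⟨v, hv⟩ hvc).1 with h' | h'
        · exact absurd ((hall ⟨v, hv⟩ hvc).mp h') hu0A
        · exact h'
      obtain ⟨y, hyA, hy0⟩ := (Submodule.ne_bot_iff _).mp hA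
      have hyLc : y ∈ Lc c := hsup ▸ Submodule.mem_sup_left hyA
      exact hy0 (inner_self_eq_zero.mp (hAC y hyA y (hLcC hyLc)))
  refine ⟨fun c => ⟨hLcne c, hindec c⟩, hsupLc, horth, ?_⟩
  -- uniqueness
  intro ι M hMind hMorth hMsup
  have hMle : ∀ i, M i ≤ L := fun i => hMsup ▸ le_iSup M i
  have hmem : ∀ (v : Euc n), v ∈ I → ∃ i, v ∈ M i ∧ ∀ j, v ∈ M j → j = i := by
    intro v hv
    have hvL : v ∈ ⨆ i, M i := by rw [hMsup]; exact hIL v hv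
    obtain ⟨f, hf, hsum⟩ := (Submodule.mem_iSup_iff_exists_finsupp M v).mp hvL
    have hdiag : ∀ k, f k ≠ 0 → ⟪f k, v⟫ = ⟪f k, f k⟫ := by
      intro k hk
      rw [← hsum, Finsupp.sum, inner_sum]
      refine Finset.sum_eq_single k
        (fun m _ hmk => hMorth k m (Ne.symm hmk) (f k) (hf k) (f m) (hf m))
        (fun hk' => (hk (Finsupp.notMem_support_iff.mp hk')).elim)
    have hone : ∀ i j, f i ≠ 0 → f j ≠ 0 → i = j := by
      intro i j hi hj
      by_contra hij
      refine hIod v hv ⟨f i, v - f i, hMle i (hf i),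
        Submodule.sub_mem L (hIL v hv) (hMle i (hf i)), hi, ?_, by abel, ?_⟩
      · intro h0
        have h1 : ⟪f j, v - f i⟫ = 0 := by rw [h0, inner_zero_right]
        rw [inner_sub_right, hdiag j hj,
          hMorth j i (fun h => hij h.symm) (f j) (hf j) (f i) (hf i), sub_zero] at h1
        exact hj (inner_self_eq_zero.mp h1)
      · rw [inner_sub_right, hdiag i hi, sub_self]
    have hex : ∃ i, f i ≠ 0 := by
      by_contra h
      push_neg at h
      apply hI0 v hv
      rw [← hsum, Finsupp.sum]
      exact Finset.sum_eq_zero (fun k _ => h k)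
    obtain ⟨i, hi⟩ := hex
    have hvi : v ∈ M i := by
      have hvfi : v = f i := by
        rw [← hsum, Finsupp.sum]
        have hsupp : f.support ⊆ {i} := by
          intro k hk
          simp only [Finset.mem_singleton]
          exact hone k i (Finsupp.mem_support_iff.mp hk) hi
        rw [Finset.sum_subset hsupp (fun x _ hx => Finsupp.notMem_support_iff.mp hx),
          Finset.sum_singleton]
      rw [hvfi]
      exact hf i
    refine ⟨i, hvi, fun j hj => ?_⟩
    by_contra hji
    exact hI0 v hv (inner_self_eq_zero.mp (hMorth j i hji v hj v hvi))
  choose idx hidx hidxu using fun (u : I) => hmem ↑u u.2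
  have hadj_idx : ∀ u w : I, Γ.Adj u w → idx u = idx w := by
    intro u w hadj
    by_contra hne
    exact ((hΓ u w).mp hadj).2 (hMorth _ _ hne _ (hidx u) _ (hidx w))
  have hwalk_idx : ∀ u w : I, Γ.Walk u w → idx u = idx w := by
    intro u w p
    induction p with
    | nil => rfl
    | cons h' p ih => exact (hadj_idx _ _ h').trans ih
  let φ : Γ.ConnectedComponent → ι :=
    SimpleGraph.ConnectedComponent.lift idx (fun u w p _ => hwalk_idx u w p)
  have hφmk : ∀ u : I, φ (Γ.connectedComponentMk u) = idx u := fun _ => rfl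
  have hφmem : ∀ c, Lc c ≤ M (φ c) := by
    intro c
    rw [hLc]
    refine Submodule.span_le.mpr ?_
    rintro v ⟨hv, hvc⟩
    rw [← hvc, hφmk]
    exact hidx ⟨v, hv⟩
  have hMeq : ∀ i, M i = ⨆ c, ⨆ _ : φ c = i, Lc c := by
    intro i
    have hTle : (⨆ c, ⨆ _ : φ c = i, Lc c) ≤ M i :=
      iSup_le fun c => iSup_le fun hc => hc ▸ hφmem c
    refine le_antisymm ?_ hTle
    intro m hm
    have hmL : m ∈ ⨆ c, Lc c := by rw [hsupLc]; exact hMle i hm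
    obtain ⟨g, hg, hgsum⟩ := (Submodule.mem_iSup_iff_exists_finsupp Lc m).mp hmL
    set a : Euc n := ∑ c ∈ g.support.filter (fun c => φ c = i), g c with ha
    have haT : a ∈ ⨆ c, ⨆ _ : φ c = i, Lc c := by
      refine Submodule.sum_mem _ ?_
      intro c hc
      simp only [Finset.mem_filter] at hc
      exact Submodule.mem_iSup_of_mem c (Submodule.mem_iSup_of_mem hc.2 (hg c))
    have hmb : m - a = ∑ c ∈ g.support.filter (fun c => ¬ φ c = i), g c := by
      have hsplit := Finset.sum_filter_add_sum_filter_not g.support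
        (fun c => φ c = i) (fun c => g c)
      have hm' : m = a + ∑ c ∈ g.support.filter (fun c => ¬ φ c = i), g c := by
        rw [ha, hsplit, ← hgsum]
        rfl
      rw [hm']
      abel
    have hbM : ∀ x ∈ M i, ⟪m - a, x⟫ = 0 := by
      intro x hx
      rw [hmb, sum_inner]
      refine Finset.sum_eq_zero ?_
      intro c hc
      simp only [Finset.mem_filter] at hc
      exact hMorth (φ c) i hc.2 _ (hφmem c (hg c)) x hx
    have hb0 : m - a = 0 := by
      have h1 : ⟪m - a, m - a⟫ = 0 := by
        rw [inner_sub_right, hbM m hm, hbM a (hTle haT), sub_zero]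
      exact inner_self_eq_zero.mp h1
    have hma : m = a := by rwa [sub_eq_zero] at hb0
    rw [hma]
    exact haT
  have hinj : Function.Injective φ := by
    intro c c' hcc
    by_contra hne
    refine (hMind (φ c)).2 ⟨Lc c, ⨆ c'', ⨆ _ : φ c'' = φ c ∧ c'' ≠ c, Lc c'',
      hLcne c, ?_, ?_, ?_⟩
    · have hle : Lc c' ≤ ⨆ c'', ⨆ _ : φ c'' = φ c ∧ c'' ≠ c, Lc c'' :=
        le_iSup_of_le c' (le_iSup_of_le ⟨hcc.symm, fun h => hne h.symm⟩ le_rfl)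
      obtain ⟨y, hy, hy0⟩ := (Submodule.ne_bot_iff _).mp (hLcne c')
      exact (Submodule.ne_bot_iff _).mpr ⟨y, hle hy, hy0⟩
    · rw [hMeq (φ c)]
      apply le_antisymm
      · refine sup_le (le_iSup_of_le c (le_iSup_of_le rfl le_rfl)) ?_
        exact iSup_le fun c'' => iSup_le fun h =>
          le_iSup_of_le c'' (le_iSup_of_le h.1 le_rfl)
      · refine iSup_le fun c'' => iSup_le fun h => ?_
        by_cases hc'' : c'' = c
        · subst hc''
          exact le_sup_left
        · refine le_trans ?_ (le_sup_right (a := Lc c))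
          exact le_iSup_of_le c'' (le_iSup_of_le (⟨h, hc''⟩ : φ c'' = φ c ∧ c'' ≠ c) le_rfl)
    · apply kneserAux_orthLat_iSup
      intro c''
      apply kneserAux_orthLat_iSup
      intro h
      exact horth c c'' (fun he => h.2 he.symm)
  have hsurj : Function.Surjective φ := by
    intro i
    by_contra hne
    push_neg at hne
    apply (hMind i).1
    rw [hMeq i]
    exact le_bot_iff.mp (iSup_le fun c => iSup_le fun hc => (hne c hc).elim)
  have hbij : Function.Bijective φ := ⟨hinj, hsurj⟩
  refine ⟨(Equiv.ofBijective φ hbij).symm, ?_⟩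
  intro i
  have hφc0 : φ ((Equiv.ofBijective φ hbij).symm i) = i :=
    (Equiv.ofBijective φ hbij).apply_symm_apply i
  rw [hMeq i]
  apply le_antisymm
  · refine iSup_le fun c => iSup_le fun hc => ?_
    rw [hinj (hc.trans hφc0.symm)]
  · exact le_iSup_of_le _ (le_iSup_of_le hφc0 le_rfl)
end
end

section
/- Let L be a lattice of full rank on Euclidean space E with covering radius R = R(L), and let v ∈ L with ||v|| > 2R. Then v is (linearly) decomposable; in fact there exists w ∈ L with v = w + (v − w), ||w|| < ||v|| and ||v − w|| < ||v||. -/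
open scoped RealInnerProductSpace

noncomputable section

/-- The covering radius `R(L) = sup_x inf_{w ∈ L} ‖x - w‖`. -/
noncomputable def coveringRadius {n : ℕ} (L : Submodule ℤ (Euc n)) : ℝ :=
  ⨆ x : Euc n, ⨅ w : L, ‖x - (w : Euc n)‖


set_option maxHeartbeats 1000000 in
/-- Auxiliary: a uniform bound on the distance from any point to the lattice. -/
lemma dist_bound_aux {n : ℕ} (L : Submodule ℤ (Euc n))
    (hspan : Submodule.span ℝ (L : Set (Euc n)) = ⊤) :
    ∃ C : ℝ, ∀ x : Euc n, ∃ w ∈ L, ‖x - w‖ ≤ C := by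
  obtain ⟨b, hbL, hsp, hli⟩ := exists_linearIndependent ℝ (L : Set (Euc n))
  rw [hspan] at hsp
  let B : Module.Basis b ℝ (Euc n) := Module.Basis.mk hli (by rw [Subtype.range_coe]; exact hsp.ge)
  haveI : Fintype b := FiniteDimensional.fintypeBasisIndex B
  refine ⟨∑ i : b, ‖B i‖, fun x => ?_⟩
  refine ⟨∑ i : b, (round (B.repr x i) : ℤ) • (B i), ?_, ?_⟩
  · exact Submodule.sum_mem _ fun i _ =>
      L.smul_mem _ (hbL (by simpa [B] using i.2))
  · have hx : x = ∑ i : b, (B.repr x i) • B i := (B.sum_repr x).symm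
    have : x - ∑ i : b, (round (B.repr x i) : ℤ) • (B i)
        = ∑ i : b, ((B.repr x i) - (round (B.repr x i) : ℝ)) • B i := by
      rw [hx]
      rw [← Finset.sum_sub_distrib]
      congr 1; ext i
      push_cast [sub_smul]
      simp [sub_mul]
    rw [this]
    calc ‖∑ i : b, ((B.repr x i) - (round (B.repr x i) : ℝ)) • B i‖
        ≤ ∑ i : b, ‖((B.repr x i) - (round (B.repr x i) : ℝ)) • B i‖ :=
          norm_sum_le _ _
      _ ≤ ∑ i : b, ‖B i‖ := by
          apply Finset.sum_le_sum
          intro i _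
          rw [norm_smul]
          have h1 : |(B.repr x i) - (round (B.repr x i) : ℝ)| ≤ 1 :=
            (abs_sub_round _).trans (by norm_num)
          calc |(B.repr x i) - (round (B.repr x i) : ℝ)| * ‖B i‖
              ≤ 1 * ‖B i‖ := mul_le_mul_of_nonneg_right h1 (norm_nonneg _)
            _ = ‖B i‖ := one_mul _

set_option maxHeartbeats 1000000 in
/-- If `‖v‖ > 2 R(L)` then `v` is (linearly) decomposable;
in fact there is `w ∈ L` with `v = w + (v - w)`, `‖w‖ < ‖v‖` and `‖v - w‖ < ‖v‖`. -/
theorem long_vectors_decompose {n : ℕ} (L : Submodule ℤ (Euc n)) (hL : IsLattice L)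
    (v : Euc n) (hv : v ∈ L) (hlong : 2 * coveringRadius L < ‖v‖) :
    LinDecomp L v ∧ ∃ w ∈ L, v = w + (v - w) ∧ ‖w‖ < ‖v‖ ∧ ‖v - w‖ < ‖v‖ := by
  obtain ⟨C, hC⟩ := dist_bound_aux L hL.2
  have hbdd : ∀ x : Euc n, (⨅ w : L, ‖x - (w : Euc n)‖) ≤ C := by
    intro x
    obtain ⟨w, hwL, hw⟩ := hC x
    have hbb : BddBelow (Set.range fun w : L => ‖x - (w : Euc n)‖) := by
      refine ⟨0, ?_⟩
      rintro r ⟨w', rfl⟩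
      exact norm_nonneg _
    exact le_trans (ciInf_le hbb ⟨w, hwL⟩) hw
  have hR : (⨅ w : L, ‖(2:ℝ)⁻¹ • v - (w : Euc n)‖) ≤ coveringRadius L :=
    le_ciSup ⟨C, by rintro r ⟨x, rfl⟩; exact hbdd x⟩ ((2:ℝ)⁻¹ • v)
  have h2 : (⨅ w : L, ‖(2:ℝ)⁻¹ • v - (w : Euc n)‖) < ‖v‖ / 2 := by
    refine hR.trans_lt ?_; linarith
  obtain ⟨w, hw⟩ := exists_lt_of_ciInf_lt h2
  have hvw : ‖(2:ℝ)⁻¹ • v - (w : Euc n)‖ < ‖v‖ / 2 := hw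
  have hhalf : ‖(2:ℝ)⁻¹ • v‖ = ‖v‖ / 2 := by
    rw [norm_smul]; simp [abs_of_nonneg]; ring
  set a : Euc n := (w : Euc n) with ha
  have h1 : ‖a‖ < ‖v‖ := by
    calc ‖a‖ = ‖(a - (2:ℝ)⁻¹ • v) + (2:ℝ)⁻¹ • v‖ := by rw [sub_add_cancel]
      _ ≤ ‖a - (2:ℝ)⁻¹ • v‖ + ‖(2:ℝ)⁻¹ • v‖ := norm_add_le _ _
      _ = ‖(2:ℝ)⁻¹ • v - a‖ + ‖(2:ℝ)⁻¹ • v‖ := by rw [norm_sub_rev]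
      _ < ‖v‖ / 2 + ‖v‖ / 2 := by rw [hhalf]; linarith
      _ = ‖v‖ := by ring
  have h2' : ‖v - a‖ < ‖v‖ := by
    have heq : v - a = (2:ℝ)⁻¹ • v + ((2:ℝ)⁻¹ • v - a) := by module
    calc ‖v - a‖ = ‖(2:ℝ)⁻¹ • v + ((2:ℝ)⁻¹ • v - a)‖ := by rw [heq]
      _ ≤ ‖(2:ℝ)⁻¹ • v‖ + ‖(2:ℝ)⁻¹ • v - a‖ := norm_add_le _ _
      _ < ‖v‖ / 2 + ‖v‖ / 2 := by rw [hhalf]; linarith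
      _ = ‖v‖ := by ring
  have haL : a ∈ L := w.2
  have hvaL : v - a ∈ L := L.sub_mem hv haL
  constructor
  · rcases le_total ‖v - a‖ ‖a‖ with h | h
    · exact ⟨a, v - a, haL, hvaL, by abel, h1, h⟩
    · exact ⟨v - a, a, hvaL, haL, by abel, h2', h⟩
  · exact ⟨a, haL, by abel, h1, h2'⟩
end
end
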